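/- arXiv:2404.01668 — 3 statements merged into one kernel-verified Lean document; each statement's English description precedes it below -/
import Mathlib

section
/- Let F be a norm on ℝ^N (N ≥ 2) with dual norm F°, and suppose F° is (Fréchet) differentiable at a point x ∈ ℝ^N \ {0}. Then the vector field W(y) := F°(y)^{−N} · y is differentiable at x and its divergence at x, namely the trace of its Fréchet derivative at x, equals 0. -/
/-!
The polar norm `F°` is positively homogeneous of degree one, so Euler's relation gives
`dF°(x) x = F°(x)`. For a radial field `g(y) y` on an `n`-dimensional space the divergence is
`n g(x) + dg(x) x`; with `g = (F°)^{-n}` this is `n F°(x)^{-n} - n F°(x)^{-n-1} dF°(x) x = 0`.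
The division by `F°(x)` is legitimate because the unit ball of `F` is bounded (a norm on a
finite-dimensional space dominates a multiple of the Euclidean norm), so `F°(x) ≥ ‖x‖² / F(x) > 0`.
-/

open scoped RealInnerProductSpace
open Module

/-- The dual (polar) norm `F°(ξ) = sup { ξ · y : F(y) ≤ 1 }` of `F`. -/
noncomputable def polar {N : ℕ} (F : EuclideanSpace ℝ (Fin N) → ℝ)
    (ξ : EuclideanSpace ℝ (Fin N)) : ℝ :=
  sSup ((fun y => (inner ℝ ξ y : ℝ)) '' {y | F y ≤ 1})

section FiniteDimensional

variable {E : Type*} [NormedAddCommGroup E] [NormedSpace ℝ E] [FiniteDimensional ℝ E]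

theorem Seminorm.continuous_of_finiteDimensional (p : Seminorm ℝ E) : Continuous p :=
  p.convexOn.locallyLipschitz.continuous

theorem Seminorm.exists_pos_mul_norm_le (p : Seminorm ℝ E) (hp : ∀ x, x ≠ 0 → 0 < p x) :
    ∃ c > 0, ∀ y, c * ‖y‖ ≤ p y := by
  rcases subsingleton_or_nontrivial E with hE | hE
  · exact ⟨1, one_pos, fun y => by simp [Subsingleton.elim y 0]⟩
  obtain ⟨z, hz, hmin⟩ := (isCompact_sphere (0 : E) 1).exists_isMinOn
    (NormedSpace.sphere_nonempty.mpr zero_le_one) p.continuous_of_finiteDimensional.continuousOn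
  have hz0 : z ≠ 0 := ne_zero_of_mem_unit_sphere ⟨z, hz⟩
  refine ⟨p z, hp z hz0, fun y => ?_⟩
  rcases eq_or_ne y 0 with rfl | hy
  · simp
  have hny : 0 < ‖y‖ := norm_pos_iff.mpr hy
  have hunit : ‖y‖⁻¹ • y ∈ Metric.sphere (0 : E) 1 := by
    rw [mem_sphere_zero_iff_norm, norm_smul, norm_inv, norm_norm, inv_mul_cancel₀ hny.ne']
  calc p z * ‖y‖ ≤ p (‖y‖⁻¹ • y) * ‖y‖ := mul_le_mul_of_nonneg_right (hmin hunit) hny.le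
    _ = p y := by rw [map_smul_eq_mul, norm_inv, norm_norm, mul_comm, ← mul_assoc,
      mul_inv_cancel₀ hny.ne', one_mul]

end FiniteDimensional

theorem polar_smul_of_nonneg {N : ℕ} (F : EuclideanSpace ℝ (Fin N) → ℝ) {t : ℝ} (ht : 0 ≤ t)
    (ξ : EuclideanSpace ℝ (Fin N)) : polar F (t • ξ) = t * polar F ξ := by
  rw [polar, polar, ← smul_eq_mul, ← Real.sSup_smul_of_nonneg ht, ← Set.image_smul,
    Set.image_image]
  simp_rw [real_inner_smul_left, smul_eq_mul]

theorem polar_pos {N : ℕ} (p : Seminorm ℝ (EuclideanSpace ℝ (Fin N)))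
    (hp : ∀ x, x ≠ 0 → 0 < p x) {x : EuclideanSpace ℝ (Fin N)} (hx : x ≠ 0) :
    0 < polar p x := by
  obtain ⟨c, hc, hpc⟩ := p.exists_pos_mul_norm_le hp
  have hbdd : BddAbove ((fun y => ⟪x, y⟫) '' {y | p y ≤ 1}) := by
    refine ⟨‖x‖ * (1 / c), ?_⟩
    rintro _ ⟨y, hy, rfl⟩
    have hy' : ‖y‖ ≤ 1 / c := (le_div_iff₀' hc).mpr ((hpc y).trans hy)
    calc ⟪x, y⟫ ≤ ‖x‖ * ‖y‖ := real_inner_le_norm x y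
      _ ≤ ‖x‖ * (1 / c) := by gcongr
  have hpx : 0 < p x := hp x hx
  have hmem : (p x)⁻¹ • x ∈ {y | p y ≤ 1} := by
    simp [map_smul_eq_mul, abs_of_pos hpx, hpx.ne']
  calc 0 < ⟪x, (p x)⁻¹ • x⟫ := by
        rw [real_inner_smul_right, real_inner_self_eq_norm_sq]
        have := norm_pos_iff.mpr hx
        positivity
    _ ≤ polar p x := le_csSup hbdd (Set.mem_image_of_mem _ hmem)

section Divergence

variable {E : Type*} [NormedAddCommGroup E] [NormedSpace ℝ E]

theorem HasFDerivAt.apply_self_of_pos_homogeneous {f : E → ℝ} {f' : E →L[ℝ] ℝ} {x : E}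
    (hf : HasFDerivAt f f' x) (hom : ∀ t : ℝ, 0 < t → f (t • x) = t * f x) : f' x = f x := by
  have hray : HasDerivAt (fun t : ℝ => f (t • x)) (f' x) 1 := by
    have hline : HasDerivAt (fun t : ℝ => t • x) x 1 := by
      simpa using (hasDerivAt_id (1 : ℝ)).smul_const x
    exact (one_smul ℝ x ▸ hf).comp_hasDerivAt 1 hline
  have hlin : HasDerivAt (fun t : ℝ => f (t • x)) (f x) 1 := by
    refine (hasDerivAt_mul_const (f x)).congr_of_eventuallyEq ?_
    filter_upwards [Ioi_mem_nhds one_pos] with t ht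
    simpa using hom t ht
  exact hray.unique (by simpa using hlin)

variable [FiniteDimensional ℝ E]

theorem HasFDerivAt.trace_fderiv_smul_self {g : E → ℝ} {g' : E →L[ℝ] ℝ} {x : E}
    (hg : HasFDerivAt g g' x) :
    LinearMap.trace ℝ E (fderiv ℝ (fun y => g y • y) x).toLinearMap
      = g x * finrank ℝ E + g' x := by
  have hW : HasFDerivAt (fun y => g y • y) (g x • ContinuousLinearMap.id ℝ E + g'.smulRight x) x :=
    hg.smul (hasFDerivAt_id x)
  rw [hW.fderiv]
  simp [LinearMap.trace_id]

theorem divergence_zpow_neg_finrank_smul_self_eq_zero {φ : E → ℝ} {x : E}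
    (hφ : DifferentiableAt ℝ φ x) (hφx : φ x ≠ 0) (hom : ∀ t : ℝ, 0 < t → φ (t • x) = t * φ x) :
    DifferentiableAt ℝ (fun y => φ y ^ (-(finrank ℝ E : ℤ)) • y) x ∧
    LinearMap.trace ℝ E (fderiv ℝ (fun y => φ y ^ (-(finrank ℝ E : ℤ)) • y) x).toLinearMap
      = 0 := by
  set n := finrank ℝ E
  have hg : HasFDerivAt (fun y => φ y ^ (-(n : ℤ)))
      ((((-n : ℤ) : ℝ) * φ x ^ (-(n : ℤ) - 1)) • fderiv ℝ φ x) x :=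
    (hasDerivAt_zpow _ (φ x) (.inl hφx)).comp_hasFDerivAt x hφ.hasFDerivAt
  refine ⟨hg.differentiableAt.smul differentiableAt_id, ?_⟩
  have heuler := hφ.hasFDerivAt.apply_self_of_pos_homogeneous hom
  rw [hg.trace_fderiv_smul_self, FunLike.coe_smul, Pi.smul_apply, heuler,
    smul_eq_mul, zpow_sub_one₀ hφx]
  field_simp
  push_cast
  ring

end Divergence

theorem div_capacitary_flux_field_general {N : ℕ}
    (F : EuclideanSpace ℝ (Fin N) → ℝ)
    (hF_add : ∀ x y, F (x + y) ≤ F x + F y)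
    (hF_smul : ∀ (a : ℝ) x, F (a • x) = |a| * F x)
    (hF_pos : ∀ x, x ≠ 0 → 0 < F x)
    (x : EuclideanSpace ℝ (Fin N)) (hx : x ≠ 0)
    (hdiff : DifferentiableAt ℝ (polar F) x) :
    DifferentiableAt ℝ
      (fun y : EuclideanSpace ℝ (Fin N) => (polar F y ^ (-(N : ℤ))) • y) x ∧
    LinearMap.trace ℝ (EuclideanSpace ℝ (Fin N))
      (fderiv ℝ
        (fun y : EuclideanSpace ℝ (Fin N) => (polar F y ^ (-(N : ℤ))) • y) x).toLinearMap
      = 0 := by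
  let p : Seminorm ℝ (EuclideanSpace ℝ (Fin N)) :=
    .of F hF_add fun a y => by rw [hF_smul, Real.norm_eq_abs]
  have hpolar : 0 < polar F x := polar_pos p hF_pos hx
  simpa using divergence_zpow_neg_finrank_smul_self_eq_zero hdiff hpolar.ne'
    fun t ht => polar_smul_of_nonneg F ht.le x

/-- If `F` is a norm on `ℝ^N` (`N ≥ 2`) and `F°` is differentiable at `x ≠ 0`,
then the field `W(y) = F°(y)^{−N} • y` is differentiable at `x` and its
divergence (the trace of its Fréchet derivative) at `x` equals `0`. -/
theorem div_capacitary_flux_field {N : ℕ} (hN : 2 ≤ N)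
    (F : EuclideanSpace ℝ (Fin N) → ℝ)
    (hF_add : ∀ x y, F (x + y) ≤ F x + F y)
    (hF_smul : ∀ (a : ℝ) x, F (a • x) = |a| * F x)
    (hF_pos : ∀ x, x ≠ 0 → 0 < F x)
    (x : EuclideanSpace ℝ (Fin N)) (hx : x ≠ 0)
    (hdiff : DifferentiableAt ℝ (polar F) x) :
    DifferentiableAt ℝ
      (fun y : EuclideanSpace ℝ (Fin N) => (polar F y ^ (-(N : ℤ))) • y) x ∧
    LinearMap.trace ℝ (EuclideanSpace ℝ (Fin N))
      (fderiv ℝ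
        (fun y : EuclideanSpace ℝ (Fin N) => (polar F y ^ (-(N : ℤ))) • y) x).toLinearMap
      = 0 :=
  div_capacitary_flux_field_general F hF_add hF_smul hF_pos x hx hdiff
end

section
/- Let 1 < p < N be real numbers, set p' := p/(p−1), θ := N/(N−p), σ₀ := (2N − p)/(2N p'), σ₁ := θσ₀, and define g(s) := |s| p / |s p − p + 1| for real s with s p ≠ p − 1. Then: (i) σ₀ < 1/p' < σ₁; (ii) g(σ₀) = g(σ₁) = 2N/p − 1; and (iii) for every integer l ∈ ℤ, g(θ^l σ₀) ≤ 2N/p − 1. -/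
/-- The factor `g(s) = |s| p / |sp − p + 1|` from the Moser iteration. -/
noncomputable def moserFactor (p s : ℝ) : ℝ := |s| * p / |s * p - p + 1|

/-!
Measured in units of `1/p' = (p - 1)/p`, the factor becomes `g(t/p') = |t|/|t - 1|`, which
increases on `[0, 1)` and decreases on `(1, ∞)`. With `r = 2N/p - 1` the two exponents are
`σ₀ = (r/(r+1))/p'` and `σ₁ = (r/(r-1))/p'`, the two positive solutions of `|t|/|t - 1| = r`;
hence `θ^l σ₀ ≤ σ₀` for `l ≤ 0` and `θ^l σ₀ ≥ σ₁` for `l ≥ 1` both give `g ≤ r`.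
-/

open Set

noncomputable def scaledMoserFactor (t : ℝ) : ℝ := |t| / |t - 1|

theorem moserFactor_mul_div {p : ℝ} (hp : 0 < p) (hp₁ : p ≠ 1) (t : ℝ) :
    moserFactor p (t * ((p - 1) / p)) = scaledMoserFactor t := by
  have hp₁' : p - 1 ≠ 0 := sub_ne_zero.mpr hp₁
  have hden : t * ((p - 1) / p) * p - p + 1 = (t - 1) * (p - 1) := by
    field_simp; ring
  rw [moserFactor, scaledMoserFactor, hden, abs_mul, abs_mul, abs_div, abs_of_pos hp]
  field_simp

theorem monotoneOn_scaledMoserFactor : MonotoneOn scaledMoserFactor (Ico 0 1) := by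
  rintro s ⟨hs₀, hs₁⟩ t ⟨-, ht₁⟩ hst
  simp only [scaledMoserFactor, abs_of_nonneg hs₀, abs_of_nonneg (hs₀.trans hst),
    abs_of_neg (sub_neg.mpr hs₁), abs_of_neg (sub_neg.mpr ht₁)]
  rw [div_le_div_iff₀ (by linarith) (by linarith)]
  nlinarith

theorem antitoneOn_scaledMoserFactor : AntitoneOn scaledMoserFactor (Ioi 1) := by
  rintro s hs t ht hst
  simp only [mem_Ioi] at hs ht
  simp only [scaledMoserFactor, abs_of_pos (zero_lt_one.trans hs),
    abs_of_pos (zero_lt_one.trans ht), abs_of_pos (sub_pos.mpr hs), abs_of_pos (sub_pos.mpr ht)]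
  rw [div_le_div_iff₀ (by linarith) (by linarith)]
  nlinarith

theorem scaledMoserFactor_div_add_one {r : ℝ} (hr : 0 < r) :
    scaledMoserFactor (r / (r + 1)) = r := by
  have hsub : r / (r + 1) - 1 = -(1 / (r + 1)) := by field_simp; ring
  rw [scaledMoserFactor, hsub, abs_neg, abs_of_pos (by positivity), abs_of_pos (by positivity)]
  field_simp

theorem scaledMoserFactor_div_sub_one {r : ℝ} (hr : 1 < r) :
    scaledMoserFactor (r / (r - 1)) = r := by
  have hr₁ : 0 < r - 1 := sub_pos.mpr hr
  have hsub : r / (r - 1) - 1 = 1 / (r - 1) := by field_simp; ring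
  rw [scaledMoserFactor, hsub, abs_of_pos (by positivity), abs_of_pos (by positivity)]
  field_simp

theorem scaledMoserFactor_zpow_mul_le {θ t r : ℝ} (ht : 0 ≤ t) (ht₁ : t < 1) (hθt : 1 < θ * t)
    (h₀ : scaledMoserFactor t ≤ r) (h₁ : scaledMoserFactor (θ * t) ≤ r) (l : ℤ) :
    scaledMoserFactor (θ ^ l * t) ≤ r := by
  have hθ : 1 < θ := by nlinarith
  have hθ₀ : 0 < θ := zero_lt_one.trans hθ
  rcases le_or_gt l 0 with hl | hl
  · have hle : θ ^ l * t ≤ t := mul_le_of_le_one_left ht (zpow_le_one_of_nonpos₀ hθ.le hl)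
    exact (monotoneOn_scaledMoserFactor ⟨by positivity, hle.trans_lt ht₁⟩ ⟨ht, ht₁⟩ hle).trans h₀
  · have hge : θ * t ≤ θ ^ l * t := by
      gcongr
      simpa using zpow_le_zpow_right₀ hθ.le (show (1 : ℤ) ≤ l by omega)
    exact (antitoneOn_scaledMoserFactor hθt (hθt.trans_le hge) hge).trans h₁

theorem div_add_one_eq_of_eq_two_mul_div_sub_one {N p r : ℝ} (hN : N ≠ 0) (hp : p ≠ 0)
    (hr : r = 2 * N / p - 1) : r / (r + 1) = (2 * N - p) / (2 * N) := by
  rw [hr, sub_add_cancel]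
  field_simp

theorem div_sub_one_eq_of_eq_two_mul_div_sub_one {N p r : ℝ} (hpN : N - p ≠ 0) (hp : p ≠ 0)
    (hr : r = 2 * N / p - 1) : r / (r - 1) = (2 * N - p) / (2 * (N - p)) := by
  have hr_sub : r - 1 = 2 * (N - p) / p := by rw [hr]; field_simp; ring
  rw [hr_sub, hr]
  field_simp

/-- Elementary facts about the factor `g(s) = |s|p/|sp − p + 1|` in the Moser
iteration of the anisotropic Harnack inequality: with `p' = p/(p−1)`,
`θ = N/(N−p)`, `σ₀ = (2N − p)/(2Np')` and `σ₁ = θσ₀`, one has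
`σ₀ < 1/p' < σ₁`, `g(σ₀) = g(σ₁) = 2N/p − 1`, and `g(θ^l σ₀) ≤ 2N/p − 1`
for every integer `l`. -/
theorem moser_factor_bounds {N : ℕ}
    (p : ℝ) (hp : 1 < p) (hpN : p < N)
    (p' θ σ₀ σ₁ : ℝ)
    (hp' : p' = p / (p - 1))
    (hθ : θ = (N : ℝ) / ((N : ℝ) - p))
    (hσ₀ : σ₀ = (2 * (N : ℝ) - p) / (2 * (N : ℝ) * p'))
    (hσ₁ : σ₁ = θ * σ₀) :
    (σ₀ < 1 / p' ∧ 1 / p' < σ₁) ∧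
    (moserFactor p σ₀ = 2 * (N : ℝ) / p - 1 ∧
      moserFactor p σ₁ = 2 * (N : ℝ) / p - 1) ∧
    (∀ l : ℤ, moserFactor p (θ ^ l * σ₀) ≤ 2 * (N : ℝ) / p - 1) := by
  set r := 2 * (N : ℝ) / p - 1 with hr
  have hp₀ : 0 < p := zero_lt_one.trans hp
  have hN : 0 < (N : ℝ) := hp₀.trans hpN
  have hr₁ : 1 < r := by
    rw [hr, lt_sub_iff_add_lt, lt_div_iff₀ hp₀]
    linarith
  have hσ₀' : σ₀ = r / (r + 1) * ((p - 1) / p) := by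
    rw [hσ₀, hp', div_add_one_eq_of_eq_two_mul_div_sub_one hN.ne' hp₀.ne' hr]
    field_simp
  have hθr : θ * (r / (r + 1)) = r / (r - 1) := by
    rw [hθ, div_add_one_eq_of_eq_two_mul_div_sub_one hN.ne' hp₀.ne' hr,
      div_sub_one_eq_of_eq_two_mul_div_sub_one (sub_pos.mpr hpN).ne' hp₀.ne' hr]
    field_simp
  have hσ₁' : σ₁ = r / (r - 1) * ((p - 1) / p) := by rw [hσ₁, hσ₀', ← mul_assoc, hθr]
  have hq : 1 / p' = (p - 1) / p := by rw [hp', one_div_div]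
  have hq₀ : 0 < (p - 1) / p := div_pos (sub_pos.mpr hp) hp₀
  have ht₁ : r / (r + 1) < 1 := (div_lt_one (by linarith)).mpr (by linarith)
  have hθt : 1 < r / (r - 1) := (one_lt_div (by linarith)).mpr (by linarith)
  refine ⟨⟨?_, ?_⟩, ⟨?_, ?_⟩, fun l => ?_⟩
  · rw [hσ₀', hq]; exact mul_lt_of_lt_one_left hq₀ ht₁
  · rw [hσ₁', hq]; exact lt_mul_of_one_lt_left hq₀ hθt
  · rw [hσ₀', moserFactor_mul_div hp₀ hp.ne', scaledMoserFactor_div_add_one (by linarith)]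
  · rw [hσ₁', moserFactor_mul_div hp₀ hp.ne', scaledMoserFactor_div_sub_one hr₁]
  · rw [hσ₀', ← mul_assoc, moserFactor_mul_div hp₀ hp.ne']
    refine scaledMoserFactor_zpow_mul_le (by positivity) ht₁ (hθr ▸ hθt)
      (scaledMoserFactor_div_add_one (by linarith)).le ?_ l
    rw [hθr, scaledMoserFactor_div_sub_one hr₁]
end

section
/- Let s(x) := √(x² + 3/4) and define, on the open region U := { (x, y) ∈ ℝ² : x > 0 and y² < x² + 3/4 }, the function v(x, y) := (1/2) log( (x + s(x)) / (3 (s(x) − x)) ) and the vector field z(x, y) := (1, y/s(x)). Then on U: (i) v is differentiable with ∂v/∂x = 1/s(x) and ∂v/∂y = 0, so that the ℓ¹-norm of the gradient satisfies ‖∇v(x,y)‖₁ = 1/s(x); (ii) z is differentiable with divergence div z(x, y) = 1/s(x) = ‖∇v(x,y)‖₁; (iii) z(x,y) · ∇v(x,y) = ‖∇v(x,y)‖₁; and (iv) ‖z(x,y)‖_∞ ≤ 1. -/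
/-!
Since `(s(x) - x)(s(x) + x) = 3/4`, the quotient inside the logarithm is `(x + s(x))² / (9/4)`,
so `v(x, y) = log (x + s(x)) - log (3/2)`, whose `x`-derivative is `1/s(x)`; `v` does not depend
on `y`. The field `z` has `∂z₂/∂y = 1/s(x)`, and `|y| < s(x)` on the region gives `‖z‖_∞ ≤ 1`.
-/

open Real

section PartialDerivatives

variable {F : Type*} [NormedAddCommGroup F] [NormedSpace ℝ F] {f : ℝ × ℝ → F} {q : ℝ × ℝ}

theorem fderiv_apply_one_zero_eq (hf : DifferentiableAt ℝ f q) {a : F}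
    (h : HasDerivAt (fun x => f (x, q.2)) a q.1) : fderiv ℝ f q (1, 0) = a :=
  (hf.hasFDerivAt.comp_hasDerivAt q.1 ((hasDerivAt_id _).prodMk (hasDerivAt_const _ _))).unique h

theorem fderiv_apply_zero_one_eq (hf : DifferentiableAt ℝ f q) {a : F}
    (h : HasDerivAt (fun y => f (q.1, y)) a q.2) : fderiv ℝ f q (0, 1) = a :=
  (hf.hasFDerivAt.comp_hasDerivAt q.2 ((hasDerivAt_const _ _).prodMk (hasDerivAt_id _))).unique h

theorem ContinuousLinearMap.apply_prod_eq (L : ℝ × ℝ →L[ℝ] F) (a b : ℝ) :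
    L (a, b) = a • L (1, 0) + b • L (0, 1) := by
  rw [← L.map_smul, ← L.map_smul, ← L.map_add]
  simp

end PartialDerivatives

section LogAddSqrt

variable {c : ℝ}

theorem hasDerivAt_sqrt_sq_add (hc : 0 < c) (x : ℝ) :
    HasDerivAt (fun x => √(x ^ 2 + c)) (x / √(x ^ 2 + c)) x := by
  have hsq : HasDerivAt (fun x => x ^ 2 + c) (2 * x) x := by
    simpa using (hasDerivAt_pow 2 x).add_const c
  convert hsq.sqrt (by positivity) using 1
  field_simp

theorem hasDerivAt_log_add_sqrt (hc : 0 < c) (x : ℝ) :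
    HasDerivAt (fun x => log (x + √(x ^ 2 + c))) (√(x ^ 2 + c))⁻¹ x := by
  have hsum : 0 < x + √(x ^ 2 + c) := by
    linarith [neg_sqrt_lt_of_sq_lt (lt_add_of_pos_right (x ^ 2) hc)]
  refine (((hasDerivAt_id' x).fun_add (hasDerivAt_sqrt_sq_add hc x)).log hsum.ne').congr_deriv ?_
  field_simp
  ring

theorem half_log_add_sqrt_div_sub (hc : 0 < c) {k : ℝ} (hk : k ≠ 0) (x : ℝ) :
    1 / 2 * log ((x + √(x ^ 2 + c)) / (k * (√(x ^ 2 + c) - x)))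
      = log (x + √(x ^ 2 + c)) - 1 / 2 * log (k * c) := by
  have hsq : √(x ^ 2 + c) ^ 2 = x ^ 2 + c := sq_sqrt (by positivity)
  have hsub : 0 < √(x ^ 2 + c) - x := by
    linarith [lt_sqrt_of_sq_lt (lt_add_of_pos_right (x ^ 2) hc)]
  have hsum : 0 < x + √(x ^ 2 + c) := by
    linarith [neg_sqrt_lt_of_sq_lt (lt_add_of_pos_right (x ^ 2) hc)]
  have hquot : (x + √(x ^ 2 + c)) / (k * (√(x ^ 2 + c) - x))
      = (x + √(x ^ 2 + c)) ^ 2 / (k * c) := by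
    field_simp
    nlinarith
  rw [hquot, log_div (by positivity) (by positivity), log_pow]
  ring

theorem hasDerivAt_half_log_add_sqrt_div_sub (hc : 0 < c) {k : ℝ} (hk : k ≠ 0) (x : ℝ) :
    HasDerivAt (fun x => 1 / 2 * log ((x + √(x ^ 2 + c)) / (k * (√(x ^ 2 + c) - x))))
      (√(x ^ 2 + c))⁻¹ x := by
  simp only [half_log_add_sqrt_div_sub hc hk]
  exact (hasDerivAt_log_add_sqrt hc x).sub_const _

end LogAddSqrt

/-- Pointwise verification, in the region `{x > 0, y² < x² + 3/4}`, of the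
explicit solution of the crystalline inverse mean curvature flow with
anisotropy `F = ℓ¹` starting from the rectangle `]−1/2,1/2[ × ]−1,1[`
(Example 9.2 of the paper): with `s(x) = √(x² + 3/4)`,
`v(x,y) = (1/2) log((x + s(x))/(3(s(x) − x)))` and `z(x,y) = (1, y/s(x))`,
one has `∂v/∂x = 1/s(x)`, `∂v/∂y = 0`, `‖∇v‖₁ = 1/s(x)`,
`div z = 1/s(x) = ‖∇v‖₁`, `z · ∇v = ‖∇v‖₁`, and `‖z‖_∞ ≤ 1`. -/
theorem rectangle_crystalline_solution
    (s : ℝ → ℝ) (hs : ∀ x : ℝ, s x = Real.sqrt (x ^ 2 + 3 / 4))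
    (v : ℝ × ℝ → ℝ)
    (hv : ∀ q : ℝ × ℝ, v q = (1 / 2) * Real.log ((q.1 + s q.1) / (3 * (s q.1 - q.1))))
    (z : ℝ × ℝ → ℝ × ℝ)
    (hz : ∀ q : ℝ × ℝ, z q = (1, q.2 / s q.1)) :
    ∀ q : ℝ × ℝ, 0 < q.1 → q.2 ^ 2 < q.1 ^ 2 + 3 / 4 →
      -- (i) v is differentiable with ∂v/∂x = 1/s(x), ∂v/∂y = 0,
      -- so that ‖∇v‖₁ = 1/s(x)
      (DifferentiableAt ℝ v q ∧
        fderiv ℝ v q (1, 0) = 1 / s q.1 ∧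
        fderiv ℝ v q (0, 1) = 0 ∧
        |fderiv ℝ v q (1, 0)| + |fderiv ℝ v q (0, 1)| = 1 / s q.1) ∧
      -- (ii) z is differentiable with div z = 1/s(x) = ‖∇v‖₁
      (DifferentiableAt ℝ z q ∧
        fderiv ℝ (fun r => (z r).1) q (1, 0) + fderiv ℝ (fun r => (z r).2) q (0, 1)
          = 1 / s q.1 ∧
        fderiv ℝ (fun r => (z r).1) q (1, 0) + fderiv ℝ (fun r => (z r).2) q (0, 1)
          = |fderiv ℝ v q (1, 0)| + |fderiv ℝ v q (0, 1)|) ∧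
      -- (iii) z · ∇v = ‖∇v‖₁
      fderiv ℝ v q (z q) = |fderiv ℝ v q (1, 0)| + |fderiv ℝ v q (0, 1)| ∧
      -- (iv) ‖z‖_∞ ≤ 1
      max |(z q).1| |(z q).2| ≤ 1 := by
  intro q _ hy
  set V : ℝ → ℝ := fun x => 1 / 2 * log ((x + s x) / (3 * (s x - x)))
  obtain rfl : v = V ∘ Prod.fst := funext hv
  obtain rfl : z = fun r => (1, r.2 / s r.1) := funext hz
  have hs_pos : 0 < s q.1 := by rw [hs]; positivity
  have hs_diff : DifferentiableAt ℝ s q.1 := by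
    simpa only [← hs] using (hasDerivAt_sqrt_sq_add (c := 3 / 4) (by norm_num) q.1).differentiableAt
  have hV : HasDerivAt V (1 / s q.1) q.1 := by
    simpa only [V, hs, one_div] using
      hasDerivAt_half_log_add_sqrt_div_sub (c := 3 / 4) (by norm_num) three_ne_zero q.1
  have hv_diff : DifferentiableAt ℝ (V ∘ Prod.fst) q :=
    (hV.comp_hasFDerivAt q (hasFDerivAt_fst (𝕜 := ℝ) (p := q))).differentiableAt
  have hvx := fderiv_apply_one_zero_eq hv_diff hV
  have hvy := fderiv_apply_zero_one_eq hv_diff (hasDerivAt_const q.2 (V q.1))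
  have hz1 : fderiv ℝ (fun _ : ℝ × ℝ => (1 : ℝ)) q (1, 0) = 0 := by simp
  have hz2_diff : DifferentiableAt ℝ (fun r : ℝ × ℝ => r.2 / s r.1) q := by
    fun_prop (disch := exact hs_pos.ne')
  have hz2 := fderiv_apply_zero_one_eq hz2_diff ((hasDerivAt_id q.2).div_const (s q.1))
  have hnorm : |fderiv ℝ (V ∘ Prod.fst) q (1, 0)| + |fderiv ℝ (V ∘ Prod.fst) q (0, 1)|
      = 1 / s q.1 := by
    rw [hvx, hvy, abs_zero, add_zero, abs_of_pos (one_div_pos.2 hs_pos)]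
  refine ⟨⟨hv_diff, hvx, hvy, hnorm⟩, ⟨?_, ?_, ?_⟩, ?_, ?_⟩
  · exact (differentiableAt_const _).prodMk hz2_diff
  · rw [hz1, hz2, zero_add]
  · rw [hnorm, hz1, hz2, zero_add]
  · rw [hnorm, ContinuousLinearMap.apply_prod_eq, hvx, hvy]
    simp
  · refine max_le (by norm_num) ?_
    rw [abs_div, abs_of_pos hs_pos, div_le_one hs_pos, hs]
    exact abs_le_sqrt hy.le
end
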